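/- Every root of P_m(t) = t(t^m(t-1) + (-1)^m · 2) other than 0 and -1 has absolute value strictly greater than 1. Consequently the Mahler measure of P_m is 2 and P_m has exactly m roots outside the unit circle (counted with multiplicity, for m ≥ 1). -/

import Mathlib

/-!
Write `P_m = t * Q` with `Q = t ^ m * (t - 1) + (-1) ^ m * 2`. If `Q z = 0` and `|z| ≤ 1`, then
`|z - 1| = 2 / |z| ^ m ≥ 2`, and the only point of the closed unit disc at distance `2` from `1`
is `-1`. Hence every root of `Q` has modulus `≥ 1`, so the product of the moduli of the roots
outside the circle is the modulus of the product of all roots, `|Q 0| = 2`. Finally `-1` is a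
simple root of `Q`, since `Q' (-1) = (-1) ^ m * (2 * m + 1)`, so exactly `m` of the `m + 1`
roots of `Q` lie outside the unit circle.
-/

open Polynomial
open scoped Classical

/-- The Mahler measure: product of the absolute values of roots outside the
unit circle. -/
noncomputable def mahlerM (f : Polynomial ℤ) : ℝ :=
  (((f.aroots ℂ).filter (fun z => 1 < ‖z‖)).map
    (fun z => ‖z‖)).prod

namespace Complex

theorem eq_neg_one_of_norm_le_one_of_two_le_norm_sub_one {z : ℂ} (hz : ‖z‖ ≤ 1)
    (h : 2 ≤ ‖z - 1‖) : z = -1 := by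
  have h₁ : normSq z ≤ 1 := by rw [normSq_eq_norm_sq]; nlinarith [norm_nonneg z]
  have h₂ : 4 ≤ normSq (z - 1) := by rw [normSq_eq_norm_sq]; nlinarith
  simp only [normSq_apply, sub_re, sub_im, one_re, one_im, sub_zero] at h₁ h₂
  have hre : z.re = -1 := by nlinarith
  have him : z.im = 0 := by nlinarith
  exact ext (by simp [hre]) (by simp [him])

end Complex

theorem mahlerM_eq_abs_coeff_zero {f : ℤ[X]} (hf : f.Monic) (h : ∀ z ∈ f.aroots ℂ, 1 ≤ ‖z‖) :
    mahlerM f = |(f.coeff 0 : ℝ)| := by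
  set s := f.aroots ℂ
  have hunit : ((s.filter fun z => ¬1 < ‖z‖).map fun z => ‖z‖).prod = 1 := by
    refine Multiset.prod_eq_one fun x hx => ?_
    obtain ⟨z, hz, rfl⟩ := Multiset.mem_map.1 hx
    obtain ⟨hzs, hz1⟩ := Multiset.mem_filter.1 hz
    exact le_antisymm (not_lt.1 hz1) (h z hzs)
  have hprod : f.coeff 0 = (-1) ^ f.natDegree * s.prod := by
    have := (IsAlgClosed.splits (f.map (algebraMap ℤ ℂ))).coeff_zero_eq_prod_roots_of_monic
      (hf.map _)
    rwa [coeff_map, natDegree_map_eq_of_injective (algebraMap ℤ ℂ).injective_int] at this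
  calc mahlerM f = ((s.filter fun z => 1 < ‖z‖).map fun z => ‖z‖).prod *
        ((s.filter fun z => ¬1 < ‖z‖).map fun z => ‖z‖).prod := by rw [hunit, mul_one]; rfl
    _ = ‖s.prod‖ := by
      rw [← Multiset.prod_add, ← Multiset.map_add, Multiset.filter_add_not]
      exact (map_multiset_prod (normHom : ℂ →*₀ ℝ) s).symm
    _ = |(f.coeff 0 : ℝ)| := by
      rw [← Complex.norm_intCast, hprod, norm_mul, norm_pow, norm_neg, norm_one, one_pow, one_mul]

theorem filter_one_lt_norm_aroots_X_mul {f : ℤ[X]} (hf : f ≠ 0) :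
    ((X * f).aroots ℂ).filter (fun z => 1 < ‖z‖) = (f.aroots ℂ).filter (fun z => 1 < ‖z‖) := by
  rw [aroots_mul (mul_ne_zero X_ne_zero hf), aroots_X, Multiset.singleton_add,
    Multiset.filter_cons_of_neg _ (by simp)]

theorem mahlerM_X_mul {f : ℤ[X]} (hf : f ≠ 0) : mahlerM (X * f) = mahlerM f := by
  rw [mahlerM, mahlerM, filter_one_lt_norm_aroots_X_mul hf]

/-- `P_m = X * cofactor ℤ m`. -/
noncomputable def cofactor (R : Type*) [CommRing R] (m : ℕ) : R[X] :=
  X ^ m * (X - 1) + C ((-1) ^ m * 2)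

section cofactor

variable {R : Type*} [CommRing R] (m : ℕ)

theorem map_cofactor {S : Type*} [CommRing S] (f : R →+* S) :
    (cofactor R m).map f = cofactor S m := by
  simp [cofactor, map_ofNat f]

theorem eval_cofactor (x : R) : (cofactor R m).eval x = x ^ m * (x - 1) + (-1) ^ m * 2 := by
  simp [cofactor]

theorem cofactor_monic [Nontrivial R] : (cofactor R m).Monic := by
  unfold cofactor; monicity!

theorem natDegree_cofactor [Nontrivial R] : (cofactor R m).natDegree = m + 1 := by
  unfold cofactor; compute_degree!

theorem coeff_zero_cofactor {m : ℕ} (hm : m ≠ 0) : (cofactor R m).coeff 0 = (-1) ^ m * 2 := by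
  simp [cofactor, coeff_zero_eq_eval_zero, zero_pow hm]

theorem cofactor_isRoot_neg_one : (cofactor R m).IsRoot (-1) := by
  simp only [IsRoot, eval_cofactor]; ring

theorem eval_derivative_cofactor_neg_one :
    (derivative (cofactor R m)).eval (-1) = (-1) ^ m * (2 * m + 1) := by
  cases m with
  | zero => simp [cofactor]
  | succ n =>
    simp only [cofactor, derivative_C, derivative_mul, derivative_X_pow, derivative_sub,
      derivative_X, derivative_one, Nat.cast_add, Nat.cast_one, map_add, map_natCast, map_one,
      add_tsub_cancel_right, sub_zero, mul_one, add_zero, eval_add, eval_mul, eval_natCast,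
      eval_one, eval_pow, eval_X, eval_sub]
    ring

theorem rootMultiplicity_neg_one_cofactor [IsDomain R] [CharZero R] :
    (cofactor R m).rootMultiplicity (-1) = 1 := by
  have hne := (cofactor_monic (R := R) m).ne_zero
  have hpos := (rootMultiplicity_pos hne).2 (cofactor_isRoot_neg_one m)
  have hsimple : ¬ 1 < (cofactor R m).rootMultiplicity (-1) := by
    rw [one_lt_rootMultiplicity_iff_isRoot hne]
    rintro ⟨-, hd⟩
    rw [IsRoot, eval_derivative_cofactor_neg_one] at hd
    have h₂ : (2 * m + 1 : R) ≠ 0 := by exact_mod_cast (2 * m).succ_ne_zero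
    exact mul_ne_zero (pow_ne_zero _ (neg_ne_zero.2 one_ne_zero)) h₂ hd
  omega

end cofactor

theorem aroots_cofactor (m : ℕ) : (cofactor ℤ m).aroots ℂ = (cofactor ℂ m).roots := by
  rw [aroots_def, map_cofactor]

theorem eq_neg_one_of_isRoot_cofactor {m : ℕ} {z : ℂ} (hz : (cofactor ℂ m).IsRoot z)
    (h : ‖z‖ ≤ 1) : z = -1 := by
  refine Complex.eq_neg_one_of_norm_le_one_of_two_le_norm_sub_one h ?_
  rw [IsRoot, eval_cofactor, add_eq_zero_iff_eq_neg] at hz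
  have hnorm : ‖z‖ ^ m * ‖z - 1‖ = 2 := by simpa using congrArg norm hz
  calc 2 = ‖z‖ ^ m * ‖z - 1‖ := hnorm.symm
    _ ≤ 1 * ‖z - 1‖ := by gcongr; exact pow_le_one₀ (norm_nonneg z) h
    _ = ‖z - 1‖ := one_mul _

theorem mahlerM_cofactor {m : ℕ} (hm : m ≠ 0) : mahlerM (cofactor ℤ m) = 2 := by
  rw [mahlerM_eq_abs_coeff_zero (cofactor_monic m), coeff_zero_cofactor hm]
  · simp
  · intro z hz
    rw [aroots_cofactor] at hz
    by_contra! h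
    rw [eq_neg_one_of_isRoot_cofactor (isRoot_of_mem_roots hz) h.le, norm_neg, norm_one] at h
    exact lt_irrefl _ h

theorem card_filter_one_lt_norm_aroots_cofactor (m : ℕ) :
    (((cofactor ℤ m).aroots ℂ).filter fun z => 1 < ‖z‖).card = m := by
  have hcard : ((cofactor ℤ m).aroots ℂ).card = m + 1 :=
    IsAlgClosed.card_aroots_eq_natDegree.trans (natDegree_cofactor m)
  rw [aroots_cofactor] at hcard ⊢
  set s := (cofactor ℂ m).roots
  have hinside : (s.filter fun z => ¬1 < ‖z‖) = s.filter (· = -1) :=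
    Multiset.filter_congr fun z hz =>
      ⟨fun h => eq_neg_one_of_isRoot_cofactor (isRoot_of_mem_roots hz) (not_lt.1 h),
        by rintro rfl; simp⟩
  have hinside_card : (s.filter fun z => ¬1 < ‖z‖).card = 1 := by
    rw [hinside, Multiset.filter_eq', Multiset.card_replicate, count_roots,
      rootMultiplicity_neg_one_cofactor]
  have hsplit := Multiset.card_add (s.filter fun z => 1 < ‖z‖) (s.filter fun z => ¬1 < ‖z‖)
  rw [Multiset.filter_add_not] at hsplit
  omega

/-- All roots of `P_m(t) = t (t^m (t-1) + (-1)^m 2)` other than `0` and `-1`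
lie strictly outside the unit circle; hence `M(P_m) = 2` and `N(P_m) = m`. -/
theorem stmt_7 (m : ℕ) (hm : 1 ≤ m) :
    (∀ z : ℂ, (Polynomial.aeval z) (X * (X ^ m * (X - 1) + C ((-1 : ℤ) ^ m * 2))) = 0 →
        z ≠ 0 → z ≠ -1 → 1 < ‖z‖) ∧
      mahlerM (X * (X ^ m * (X - 1) + C ((-1 : ℤ) ^ m * 2))) = 2 ∧
      (((X * (X ^ m * (X - 1) + C ((-1 : ℤ) ^ m * 2)) : Polynomial ℤ).aroots ℂ).filter
          (fun z => 1 < ‖z‖)).card = m := by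
  change (∀ z : ℂ, aeval z (X * cofactor ℤ m) = 0 → z ≠ 0 → z ≠ -1 → 1 < ‖z‖) ∧
    mahlerM (X * cofactor ℤ m) = 2 ∧
    (((X * cofactor ℤ m).aroots ℂ).filter fun z => 1 < ‖z‖).card = m
  have hne : cofactor ℤ m ≠ 0 := (cofactor_monic m).ne_zero
  refine ⟨fun z hz hz0 hz1 => ?_, ?_, ?_⟩
  · rw [aeval_def, eval₂_eq_eval_map, Polynomial.map_mul, map_X, map_cofactor, eval_mul, eval_X,
      mul_eq_zero] at hz
    exact lt_of_not_ge fun h => hz1 (eq_neg_one_of_isRoot_cofactor (hz.resolve_left hz0) h)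
  · rw [mahlerM_X_mul hne, mahlerM_cofactor (by omega)]
  · rw [filter_one_lt_norm_aroots_X_mul hne, card_filter_one_lt_norm_aroots_cofactor]
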